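/- arXiv:2408.16244 — 2 statements merged into one kernel-verified Lean document; each statement's English description precedes it below -/
import Mathlib

section
/- For any d×d matrix ρ, the operator 2∑_{k} tr(ρP_k)P_k + ∑_{0≤j<k≤d−1}[tr(ρP^±_{jk})P^±_{jk} + tr(ρQ^±_{jk})Q^±_{jk}] (summing over both + and − signs) equals ρ + tr(ρ)·I + (d−1)∑_{k} ρ_{kk}|k⟩⟨k|. -/
open Matrix Complex BigOperators

noncomputable section

/-- computational basis vector `|t⟩` in `ℂ^d`. -/
def ket (d : ℕ) (t : Fin d) : Fin d → ℂ := fun i => if i = t then 1 else 0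

/-- rank-one projector `|v⟩⟨v|`. -/
def proj {d : ℕ} (v : Fin d → ℂ) : Matrix (Fin d) (Fin d) ℂ := Matrix.vecMulVec v (star v)

/-- `P_t = |t⟩⟨t|`. -/
def Pk {d : ℕ} (t : Fin d) : Matrix (Fin d) (Fin d) ℂ := proj (ket d t)

def phiP {d : ℕ} (j k : Fin d) : Fin d → ℂ := fun i => (ket d j i + ket d k i) / ((Real.sqrt 2 : ℝ) : ℂ)
def phiM {d : ℕ} (j k : Fin d) : Fin d → ℂ := fun i => (ket d j i - ket d k i) / ((Real.sqrt 2 : ℝ) : ℂ)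
def psiP {d : ℕ} (j k : Fin d) : Fin d → ℂ := fun i => (ket d j i + Complex.I * ket d k i) / ((Real.sqrt 2 : ℝ) : ℂ)
def psiM {d : ℕ} (j k : Fin d) : Fin d → ℂ := fun i => (ket d j i - Complex.I * ket d k i) / ((Real.sqrt 2 : ℝ) : ℂ)

/-- the DDB snapshot projectors. -/
def SDDB (d : ℕ) : Set (Matrix (Fin d) (Fin d) ℂ) :=
  {M | (∃ t, M = Pk t) ∨
    ∃ j k : Fin d, j < k ∧
      (M = proj (phiP j k) ∨ M = proj (phiM j k) ∨ M = proj (psiP j k) ∨ M = proj (psiM j k))}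

/-- the DDB states (as vectors). -/
def ddbStates (d : ℕ) : Set (Fin d → ℂ) :=
  {v | (∃ t, v = ket d t) ∨
    ∃ j k : Fin d, j ≠ k ∧
      (v = phiP j k ∨ v = phiM j k ∨ v = psiP j k ∨ v = psiM j k)}

/-- the DDB measurement channel `M`. -/
def Mchan {d : ℕ} (ρ : Matrix (Fin d) (Fin d) ℂ) : Matrix (Fin d) (Fin d) ℂ :=
  ((1 : ℂ) / (2 * d)) • (ρ + (Matrix.trace ρ) • (1 : Matrix (Fin d) (Fin d) ℂ)
      + ((d : ℂ) - 1) • ∑ k, ρ k k • Pk k)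

/-- the inverse reconstruction channel `M⁻¹`. -/
def Minv {d : ℕ} (ρ : Matrix (Fin d) (Fin d) ℂ) : Matrix (Fin d) (Fin d) ℂ :=
  (2 * (d : ℂ)) • (ρ - (((d : ℂ) - 1) / d) • ∑ k, (Matrix.trace (ρ * Pk k)) • Pk k)
    - ((Matrix.trace ρ) / d) • (1 : Matrix (Fin d) (Fin d) ℂ)

/- ### auxiliary lemmas -/

lemma trace_mul_proj {d : ℕ} (ρ : Matrix (Fin d) (Fin d) ℂ) (v : Fin d → ℂ) :
    Matrix.trace (ρ * proj v) = ∑ a, (starRingEnd ℂ) (v a) * ∑ b, ρ a b * v b := by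
  simp [Matrix.trace, Matrix.diag, Matrix.mul_apply, proj, Matrix.vecMulVec_apply,
    Finset.mul_sum]
  congr 1; ext a; congr 1; ext b; ring

lemma s_mul_s : ((Real.sqrt 2 : ℝ) : ℂ) * ((Real.sqrt 2 : ℝ) : ℂ) = 2 := by
  rw [← Complex.ofReal_mul, Real.mul_self_sqrt (by norm_num : (0:ℝ) ≤ 2)]
  norm_num

lemma tr_two {d : ℕ} (ρ : Matrix (Fin d) (Fin d) ℂ) {j k : Fin d} (_ : j ≠ k) (α β : ℂ) :
    Matrix.trace (ρ * proj (fun i => (α * ket d j i + β * ket d k i) / ((Real.sqrt 2 : ℝ) : ℂ)))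
      = ((starRingEnd ℂ) α * α * ρ j j + (starRingEnd ℂ) α * β * ρ j k
        + (starRingEnd ℂ) β * α * ρ k j + (starRingEnd ℂ) β * β * ρ k k) / 2 := by
  rw [trace_mul_proj]
  have collapse : ∀ (γ δ : ℂ) (g : Fin d → ℂ),
      (∑ b, g b * ((γ * ket d j b + δ * ket d k b) / ((Real.sqrt 2 : ℝ) : ℂ)))
      = (g j * γ + g k * δ) / ((Real.sqrt 2 : ℝ) : ℂ) := by
    intro γ δ g
    simp only [ket, div_eq_mul_inv, mul_add, add_mul, mul_ite, ite_mul, mul_zero, zero_mul,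
      mul_one, Finset.sum_add_distrib, Finset.sum_ite_eq', Finset.mem_univ, if_true]
    ring
  have conjv : ∀ a, (starRingEnd ℂ) ((α * ket d j a + β * ket d k a) / ((Real.sqrt 2 : ℝ) : ℂ))
      = ((starRingEnd ℂ) α * ket d j a + (starRingEnd ℂ) β * ket d k a) / ((Real.sqrt 2 : ℝ) : ℂ) := by
    intro a
    simp only [ket, _root_.map_div₀, _root_.map_mul, _root_.map_add, Complex.conj_ofReal,
      apply_ite, _root_.map_one, _root_.map_zero]
  simp only [collapse, conjv]
  have step : ∀ x, ((starRingEnd ℂ) α * ket d j x + (starRingEnd ℂ) β * ket d k x) / ((Real.sqrt 2 : ℝ) : ℂ)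
      * ((ρ x j * α + ρ x k * β) / ((Real.sqrt 2 : ℝ) : ℂ))
      = ((ρ x j * α + ρ x k * β) / ((Real.sqrt 2 : ℝ) : ℂ))
        * ((((starRingEnd ℂ) α) * ket d j x + ((starRingEnd ℂ) β) * ket d k x) / ((Real.sqrt 2 : ℝ) : ℂ)) := by
    intro x; ring
  simp only [step, collapse]
  have h2 := s_mul_s
  field_simp
  rw [← h2]; ring

lemma ephiP {d : ℕ} (j k : Fin d) : phiP j k = fun i => ((1:ℂ) * ket d j i + (1:ℂ) * ket d k i) / ((Real.sqrt 2 : ℝ) : ℂ) := by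
  funext i; simp [phiP]
lemma ephiM {d : ℕ} (j k : Fin d) : phiM j k = fun i => ((1:ℂ) * ket d j i + (-1:ℂ) * ket d k i) / ((Real.sqrt 2 : ℝ) : ℂ) := by
  funext i; simp [phiM]; ring
lemma epsiP {d : ℕ} (j k : Fin d) : psiP j k = fun i => ((1:ℂ) * ket d j i + Complex.I * ket d k i) / ((Real.sqrt 2 : ℝ) : ℂ) := by
  funext i; simp [psiP]
lemma epsiM {d : ℕ} (j k : Fin d) : psiM j k = fun i => ((1:ℂ) * ket d j i + (-Complex.I) * ket d k i) / ((Real.sqrt 2 : ℝ) : ℂ) := by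
  funext i; simp [psiM]; ring

lemma s_pow4 : ((Real.sqrt 2 : ℝ) : ℂ) ^ 4 = 4 := by
  rw [show (4:ℕ) = 2 + 2 from rfl, pow_add, sq, s_mul_s]; norm_num

set_option maxHeartbeats 1600000 in
lemma pair_sum {d : ℕ} (ρ : Matrix (Fin d) (Fin d) ℂ) {j k : Fin d} (h : j ≠ k) :
    (Matrix.trace (ρ * proj (phiP j k))) • proj (phiP j k)
      + (Matrix.trace (ρ * proj (phiM j k))) • proj (phiM j k)
      + (Matrix.trace (ρ * proj (psiP j k))) • proj (psiP j k)
      + (Matrix.trace (ρ * proj (psiM j k))) • proj (psiM j k)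
    = (ρ j j + ρ k k) • (Pk j + Pk k)
      + ρ j k • Matrix.single j k (1:ℂ) + ρ k j • Matrix.single k j (1:ℂ) := by
  rw [ephiP, ephiM, epsiP, epsiM, tr_two ρ h, tr_two ρ h, tr_two ρ h, tr_two ρ h]
  ext a b
  simp only [Matrix.add_apply, Matrix.smul_apply, proj, Matrix.vecMulVec_apply, Pk,
    Pi.star_apply, RCLike.star_def, _root_.map_div₀, _root_.map_add, _root_.map_mul,
    Complex.conj_ofReal, _root_.map_one, map_neg, Complex.conj_I, smul_eq_mul,
    Matrix.single, Matrix.of_apply, ket]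
  have h2 := s_mul_s
  by_cases haj : a = j <;> by_cases hak : a = k <;> by_cases hbj : b = j <;> by_cases hbk : b = k <;>
    simp_all [eq_comm] <;> field_simp <;> simp only [s_pow4, s_mul_s] <;> ring_nf <;> simp only [Complex.I_sq] <;> ring

lemma PkE {d : ℕ} (t a b : Fin d) : Pk t a b = if a = t ∧ b = t then 1 else 0 := by
  simp only [Pk, proj, Matrix.vecMulVec_apply, ket, Pi.star_apply, RCLike.star_def,
    apply_ite, _root_.map_one, _root_.map_zero]
  by_cases hat : a = t <;> by_cases hbt : b = t <;> simp [hat, hbt]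

lemma trace_Pk {d : ℕ} (ρ : Matrix (Fin d) (Fin d) ℂ) (t : Fin d) :
    Matrix.trace (ρ * Pk t) = ρ t t := by
  rw [Pk, trace_mul_proj]
  simp only [ket, mul_ite, mul_one, mul_zero, Finset.sum_ite_eq', Finset.mem_univ, if_true,
    apply_ite, _root_.map_one, _root_.map_zero, ite_mul, one_mul, zero_mul]

lemma sumPk {d : ℕ} (ρ : Matrix (Fin d) (Fin d) ℂ) (a b : Fin d) :
    (∑ t, ρ t t • Pk t) a b = if a = b then ρ a a else 0 := by
  simp only [Matrix.sum_apply, Matrix.smul_apply, PkE, smul_eq_mul, mul_ite, mul_one, mul_zero]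
  by_cases hab : a = b
  · subst hab
    simp
  · rw [if_neg hab]
    apply Finset.sum_eq_zero
    intro t _
    rw [if_neg]
    rintro ⟨rfl, rfl⟩
    exact hab rfl

theorem stmt3 (d : ℕ) (ρ : Matrix (Fin d) (Fin d) ℂ) :
    (2 : ℂ) • (∑ t, (Matrix.trace (ρ * Pk t)) • Pk t)
      + ∑ p ∈ Finset.univ.filter (fun p : Fin d × Fin d => p.1 < p.2),
          ((Matrix.trace (ρ * proj (phiP p.1 p.2))) • proj (phiP p.1 p.2)
            + (Matrix.trace (ρ * proj (phiM p.1 p.2))) • proj (phiM p.1 p.2)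
            + (Matrix.trace (ρ * proj (psiP p.1 p.2))) • proj (psiP p.1 p.2)
            + (Matrix.trace (ρ * proj (psiM p.1 p.2))) • proj (psiM p.1 p.2))
    = ρ + (Matrix.trace ρ) • (1 : Matrix (Fin d) (Fin d) ℂ) + ((d : ℂ) - 1) • ∑ t, ρ t t • Pk t := by
  rw [Finset.sum_congr rfl (fun p hp =>
    pair_sum ρ (Fin.ne_of_lt (Finset.mem_filter.mp hp).2))]
  simp only [trace_Pk]
  ext a b
  simp only [Matrix.add_apply, Matrix.smul_apply, Matrix.sum_apply, smul_eq_mul, sumPk,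
    Matrix.one_apply, PkE, Matrix.single, Matrix.of_apply, mul_ite, mul_one, mul_zero,
    mul_add, add_mul]
  rw [Finset.sum_filter]
  rw [Fintype.sum_prod_type]
  by_cases hab : a = b
  · subst hab
    simp only [and_self, if_true]
    have trdef : Matrix.trace ρ = ∑ y, ρ y y := by
      simp [Matrix.trace, Matrix.diag]
    have key : ∀ x y : Fin d,
        (if x < y then
          (((if a = x then ρ x x + ρ y y else 0) + if a = y then ρ x x + ρ y y else 0) +
              if x = a ∧ y = a then ρ x y else 0) +
            if y = a ∧ x = a then ρ y x else 0
        else 0)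
        = (if a = x then (if x < y then ρ x x + ρ y y else 0) else 0)
          + (if a = y then (if x < y then ρ x x + ρ y y else 0) else 0) := by
      intro x y
      by_cases hxy : x < y
      · have hne : x ≠ y := ne_of_lt hxy
        have h1 : ¬(x = a ∧ y = a) := fun ⟨u, v⟩ => hne (u.trans v.symm)
        have h2 : ¬(y = a ∧ x = a) := fun ⟨u, v⟩ => hne (v.trans u.symm)
        simp only [hxy, if_true, h1, h2, if_false]
        ring
      · simp [hxy]
    simp only [key, Finset.sum_add_distrib]
    have L1 : (∑ x : Fin d, ∑ y : Fin d, if a = x then (if x < y then ρ x x + ρ y y else 0) else 0)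
        = ∑ y : Fin d, if a < y then ρ a a + ρ y y else 0 := by
      rw [Finset.sum_comm]
      simp [Finset.sum_ite_eq]
    have L2 : (∑ x : Fin d, ∑ y : Fin d, if a = y then (if x < y then ρ x x + ρ y y else 0) else 0)
        = ∑ x : Fin d, if x < a then ρ x x + ρ a a else 0 := by
      simp [Finset.sum_ite_eq]
    rw [L1, L2]
    have comb : ∀ y : Fin d,
        (if a < y then ρ a a + ρ y y else 0) + (if y < a then ρ y y + ρ a a else 0)
        = (ρ a a + ρ y y) - (if y = a then ρ a a + ρ a a else 0) := by
      intro y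
      rcases lt_trichotomy y a with h | h | h
      · simp [h, h.ne, not_lt_of_gt h]; ring
      · simp [h]
      · simp [h, h.ne', not_lt_of_gt h]
    rw [← Finset.sum_add_distrib]
    simp only [comb, Finset.sum_sub_distrib, Finset.sum_add_distrib, Finset.sum_const,
      Finset.card_univ, Fintype.card_fin, Finset.sum_ite_eq', Finset.mem_univ, if_true,
      nsmul_eq_mul, trdef]
    have c1 : (∑ x : Fin d, if a = x then ρ x x else 0) = ρ a a := by simp
    rw [c1]
    ring
  · rw [if_neg hab]
    have z1 : (∑ x : Fin d, if a = x ∧ b = x then ρ x x else 0) = 0 := by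
      apply Finset.sum_eq_zero
      intro t _
      rw [if_neg]
      rintro ⟨rfl, rfl⟩
      exact hab rfl
    rw [z1]
    have key : ∀ x y : Fin d,
        (if x < y then
          (((if a = x ∧ b = x then ρ x x + ρ y y else 0) +
                if a = y ∧ b = y then ρ x x + ρ y y else 0) +
              if x = a ∧ y = b then ρ x y else 0) +
            if y = a ∧ x = b then ρ y x else 0
        else 0)
        = (if x = a ∧ y = b then (if x < y then ρ x y else 0) else 0)
          + (if y = a ∧ x = b then (if x < y then ρ y x else 0) else 0) := by
      intro x y
      by_cases hxy : x < y
      · have h1 : ¬(a = x ∧ b = x) := fun ⟨u, v⟩ => hab (u.trans v.symm)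
        have h2 : ¬(a = y ∧ b = y) := fun ⟨u, v⟩ => hab (u.trans v.symm)
        simp only [hxy, if_true, h1, h2, if_false]
        ring
      · simp [hxy]
    simp only [key, Finset.sum_add_distrib]
    have dc : ∀ (c e : Fin d) (f : Fin d → Fin d → ℂ),
        (∑ x : Fin d, ∑ y : Fin d, if x = c ∧ y = e then f x y else 0) = f c e := by
      intro c e f
      simp [ite_and, Finset.sum_ite_eq', Finset.mem_univ]
    have dc2 : ∀ (c e : Fin d) (f : Fin d → Fin d → ℂ),
        (∑ x : Fin d, ∑ y : Fin d, if y = c ∧ x = e then f x y else 0) = f e c := by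
      intro c e f
      simp [ite_and, Finset.sum_ite_eq', Finset.mem_univ]
    rw [dc a b (fun x y => if x < y then ρ x y else 0),
      dc2 a b (fun x y => if x < y then ρ y x else 0)]
    rcases lt_trichotomy a b with h | h | h
    · simp [h, not_lt_of_gt h]
    · exact absurd h hab
    · simp [h, not_lt_of_gt h]

end
end

section
/- The linear map M defined by M(ρ) = (1/(2d))[ρ + tr(ρ)I + (d−1)∑_k ρ_{kk}P_k] on d×d matrices is invertible, with inverse M⁻¹(ρ) = 2d[ρ − ((d−1)/d)∑_k tr(ρP_k)P_k] − (tr(ρ)/d)I. -/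
open Matrix Complex BigOperators

noncomputable section

lemma Pk_apply {d : ℕ} (k i j : Fin d) :
    Pk k i j = (if i = k then 1 else 0) * (if j = k then 1 else 0) := by
  simp only [Pk, proj, ket, Matrix.vecMulVec_apply, Pi.star_apply]
  split <;> split <;> simp

lemma sum_smul_Pk_apply {d : ℕ} (c : Fin d → ℂ) (i j : Fin d) :
    (∑ k, c k • Pk k) i j = if i = j then c i else 0 := by
  simp only [Matrix.sum_apply, Matrix.smul_apply, Pk_apply, smul_eq_mul]
  rcases eq_or_ne i j with rfl | h
  · rw [Finset.sum_eq_single i] <;> simp +contextual [eq_comm]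
  · simp only [if_neg h]
    apply Finset.sum_eq_zero
    intro k _
    rcases eq_or_ne i k with rfl | hik
    · simp [fun hjk => h (hjk : j = i).symm, Ne.symm h]
    · simp [hik]

lemma trace_mul_Pk {d : ℕ} (ρ : Matrix (Fin d) (Fin d) ℂ) (k : Fin d) :
    Matrix.trace (ρ * Pk k) = ρ k k := by
  simp [Matrix.trace, Matrix.mul_apply, Pk_apply, Matrix.diag]

lemma Mchan_apply {d : ℕ} (ρ : Matrix (Fin d) (Fin d) ℂ) (i j : Fin d) :
    Mchan ρ i j = ((1 : ℂ) / (2 * d)) * (ρ i j + Matrix.trace ρ * (if i = j then 1 else 0)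
      + ((d : ℂ) - 1) * (if i = j then ρ i i else 0)) := by
  simp [Mchan, Matrix.add_apply, Matrix.smul_apply, sum_smul_Pk_apply, Matrix.one_apply,
    smul_eq_mul, mul_add]

lemma Minv_apply {d : ℕ} (ρ : Matrix (Fin d) (Fin d) ℂ) (i j : Fin d) :
    Minv ρ i j = (2 * (d : ℂ)) * (ρ i j - (((d : ℂ) - 1) / d) * (if i = j then ρ i i else 0))
      - (Matrix.trace ρ / d) * (if i = j then 1 else 0) := by
  simp only [Minv, Matrix.sub_apply, Matrix.smul_apply, Matrix.one_apply, smul_eq_mul]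
  rw [show (∑ k, (Matrix.trace (ρ * Pk k)) • Pk k) = ∑ k, ρ k k • Pk k by
    exact Finset.sum_congr rfl fun k _ => by rw [trace_mul_Pk]]
  rw [sum_smul_Pk_apply]

lemma trace_Mchan {d : ℕ} (hd : 1 ≤ d) (ρ : Matrix (Fin d) (Fin d) ℂ) :
    Matrix.trace (Mchan ρ) = Matrix.trace ρ := by
  have hd0 : (d : ℂ) ≠ 0 := Nat.cast_ne_zero.mpr (by omega)
  simp only [Matrix.trace, Matrix.diag, Mchan_apply, if_pos rfl, if_true, eq_self_iff_true]
  rw [← Finset.mul_sum, Finset.sum_add_distrib, Finset.sum_add_distrib, Finset.sum_const,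
    ← Finset.mul_sum, Finset.card_univ, Fintype.card_fin, nsmul_eq_mul]
  field_simp
  ring

lemma trace_Minv {d : ℕ} (hd : 1 ≤ d) (ρ : Matrix (Fin d) (Fin d) ℂ) :
    Matrix.trace (Minv ρ) = Matrix.trace ρ := by
  have hd0 : (d : ℂ) ≠ 0 := Nat.cast_ne_zero.mpr (by omega)
  simp only [Matrix.trace, Matrix.diag, Minv_apply, if_pos rfl, if_true, eq_self_iff_true]
  rw [Finset.sum_sub_distrib, ← Finset.mul_sum, Finset.sum_sub_distrib, ← Finset.mul_sum,
    Finset.sum_const, Finset.card_univ, Fintype.card_fin, nsmul_eq_mul]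
  field_simp
  ring

theorem stmt4 (d : ℕ) (hd : 1 ≤ d) :
    (∀ ρ : Matrix (Fin d) (Fin d) ℂ, Minv (Mchan ρ) = ρ) ∧ (∀ ρ : Matrix (Fin d) (Fin d) ℂ, Mchan (Minv ρ) = ρ) := by
  have hd0 : (d : ℂ) ≠ 0 := Nat.cast_ne_zero.mpr (by omega)
  constructor
  · intro ρ
    ext i j
    rw [Minv_apply, trace_Mchan hd, Mchan_apply, Mchan_apply]
    rcases eq_or_ne i j with rfl | h
    · simp only [if_pos rfl, ↓reduceIte]
      field_simp
      ring_nf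
    · simp only [if_neg h]
      field_simp
      ring
  · intro ρ
    ext i j
    rw [Mchan_apply, trace_Minv hd, Minv_apply, Minv_apply]
    rcases eq_or_ne i j with rfl | h
    · simp only [if_pos rfl, ↓reduceIte]
      field_simp
      ring
    · simp only [if_neg h]
      field_simp
      ring

end
end
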